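/- Let x = (3 − √5)/4 and let p = x(1−2x)/(1−x), q = (1−2x)²/(1−x). For a function f : [0,1]² → [0,1] define L₁(f) = (x/(1−x))·(f(1/2,1/2) − (1−x))² + p·(f(1/2,0))² + p·(f(0,1/2))² + q·(f(0,0))², and L₂(f) = (x/(1−x))·(f(1/2,1/2) − x)² + p·(f(1/2,1) − 1)² + p·(f(1,1/2) − 1)² + q·(f(1,1) − 1)². Then for every f : [0,1]² → [0,1], (1/2)·L₁(f) + (1/2)·L₂(f) ≥ (5√5 − 11)/8. -/

import Mathlib

/-!
All terms of `L₁` and `L₂` are nonnegative, and only the common atom where both forecasts are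
`1/2` constrains the aggregator in both structures: there the omniscient posteriors are `1 - x` and
`x`, so whatever `f (1/2) (1/2)` is, the two squared errors add up to at least `(1 - 2x)² / 2`.
With weight `x / (1 - x) = √5 - 2` and `(1 - 2x)² = (3 - √5) / 2` this gives `(5√5 - 11) / 8`.
-/

noncomputable section

/-- The optimal adversarial parameter `x = (3 - √5)/4`. -/
def xopt : ℝ := (3 - Real.sqrt 5) / 4

/-- `p = x(1-2x)/(1-x)`. -/
def pw : ℝ := xopt * (1 - 2*xopt) / (1 - xopt)

/-- `q = (1-2x)²/(1-x)`. -/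
def qw : ℝ := (1 - 2*xopt)^2 / (1 - xopt)

/-- Relative loss of `f` on the conditionally i.i.d. structure with prior `x`. -/
def L1 (f : ℝ → ℝ → ℝ) : ℝ :=
  (xopt/(1 - xopt)) * (f (1/2) (1/2) - (1 - xopt))^2
  + pw * (f (1/2) 0)^2 + pw * (f 0 (1/2))^2 + qw * (f 0 0)^2

/-- Relative loss of `f` on the mirror-image structure with prior `1-x`. -/
def L2 (f : ℝ → ℝ → ℝ) : ℝ :=
  (xopt/(1 - xopt)) * (f (1/2) (1/2) - xopt)^2
  + pw * (f (1/2) 1 - 1)^2 + pw * (f 1 (1/2) - 1)^2 + qw * (f 1 1 - 1)^2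

lemma sq_sub_div_two_le_sq_sub_add_sq_sub (t a b : ℝ) :
    (a - b) ^ 2 / 2 ≤ (t - a) ^ 2 + (t - b) ^ 2 := by
  nlinarith [sq_nonneg (2 * t - a - b)]

lemma sqrt_five_mem_Ioo : Real.sqrt 5 ∈ Set.Ioo 2 3 := by
  have h5 : Real.sqrt 5 ^ 2 = 5 := Real.sq_sqrt (by norm_num)
  have h0 : 0 ≤ Real.sqrt 5 := Real.sqrt_nonneg 5
  constructor <;> nlinarith

lemma xopt_mem_Ioo : xopt ∈ Set.Ioo 0 (1 / 2) := by
  obtain ⟨h2, h3⟩ := sqrt_five_mem_Ioo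
  constructor <;> rw [xopt] <;> linarith

lemma xopt_div_one_sub_xopt : xopt / (1 - xopt) = Real.sqrt 5 - 2 := by
  have h5 : Real.sqrt 5 ^ 2 = 5 := Real.sq_sqrt (by norm_num)
  have hx := xopt_mem_Ioo
  rw [div_eq_iff (by linarith [hx.2]), xopt]
  nlinarith

lemma one_sub_two_mul_xopt_sq : (1 - 2 * xopt) ^ 2 = (3 - Real.sqrt 5) / 2 := by
  have h5 : Real.sqrt 5 ^ 2 = 5 := Real.sq_sqrt (by norm_num)
  rw [xopt]
  nlinarith

lemma pw_nonneg : 0 ≤ pw := by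
  obtain ⟨h0, h1⟩ := xopt_mem_Ioo
  unfold pw
  apply div_nonneg <;> nlinarith

lemma qw_nonneg : 0 ≤ qw := by
  have h1 := xopt_mem_Ioo.2
  unfold qw
  exact div_nonneg (sq_nonneg _) (by linarith)

lemma xopt_div_one_sub_xopt_mul_sq_le_L1 (f : ℝ → ℝ → ℝ) :
    xopt / (1 - xopt) * (f (1/2) (1/2) - (1 - xopt)) ^ 2 ≤ L1 f := by
  unfold L1
  have := pw_nonneg
  have := qw_nonneg
  nlinarith [sq_nonneg (f (1/2) 0), sq_nonneg (f 0 (1/2)), sq_nonneg (f 0 0)]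

lemma xopt_div_one_sub_xopt_mul_sq_le_L2 (f : ℝ → ℝ → ℝ) :
    xopt / (1 - xopt) * (f (1/2) (1/2) - xopt) ^ 2 ≤ L2 f := by
  unfold L2
  have := pw_nonneg
  have := qw_nonneg
  nlinarith [sq_nonneg (f (1/2) 1 - 1), sq_nonneg (f 1 (1/2) - 1), sq_nonneg (f 1 1 - 1)]

theorem stmt_5_general (f : ℝ → ℝ → ℝ) :
    (1/2) * L1 f + (1/2) * L2 f ≥ (5 * Real.sqrt 5 - 11) / 8 := by
  have hw : 0 ≤ xopt / (1 - xopt) := by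
    rw [xopt_div_one_sub_xopt]; linarith [sqrt_five_mem_Ioo.1]
  calc (5 * Real.sqrt 5 - 11) / 8 = xopt / (1 - xopt) * ((1 - 2 * xopt) ^ 2 / 2) / 2 := by
        rw [xopt_div_one_sub_xopt, one_sub_two_mul_xopt_sq]
        linear_combination Real.sq_sqrt (show (0:ℝ) ≤ 5 by norm_num) / 8
    _ ≤ xopt / (1 - xopt) * ((f (1/2) (1/2) - (1 - xopt)) ^ 2 + (f (1/2) (1/2) - xopt) ^ 2) / 2 := by
        gcongr
        exact (sq_sub_div_two_le_sq_sub_add_sq_sub _ _ _).trans_eq' (by ring)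
    _ ≤ (1/2) * L1 f + (1/2) * L2 f := by
        linarith [xopt_div_one_sub_xopt_mul_sq_le_L1 f, xopt_div_one_sub_xopt_mul_sq_le_L2 f]

theorem stmt_5 (f : ℝ → ℝ → ℝ)
    (hf : ∀ a b : ℝ, a ∈ Set.Icc (0:ℝ) 1 → b ∈ Set.Icc (0:ℝ) 1 → f a b ∈ Set.Icc (0:ℝ) 1) :
    (1/2) * L1 f + (1/2) * L2 f ≥ (5 * Real.sqrt 5 - 11) / 8 :=
  stmt_5_general f
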